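/- arXiv:2411.15578 — 2 statements merged into one kernel-verified Lean document; each statement's English description precedes it below -/
import Mathlib

section
/- For every complex number λ with |λ−1| > 1, the resolvent of the continuous Cesàro operator 𝒞 on L²(ℝ) satisfies R(λ,𝒞) := (λI−𝒞)^{−1} = λ^{−2}·𝒫_{1/λ} + λ^{−1}·I, where 𝒫_α is the Hardy operator. Equivalently, for Re(α) < 1/2 with α ≠ 0, 𝒫_α = 𝒞(I − α𝒞)^{−1} = α^{−1}((I − α𝒞)^{−1} − I). -/
/-!
Fix `x ≠ 0` and put `G w = f (w * x)`, which lies in `L²(0,1)`. After the substitution `w = uv`,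
both compositions `𝒫_α 𝒞 f` and `𝒞 𝒫_α f` at `x` become integrals
`∫₀¹ v^β ∫₀¹ g(uv) du dv = ∫₀¹ v^(β-1) ∫₀^v g(w) dw dv`: with `β = -α`, `g = G` for `𝒫_α 𝒞`, and
with `β = α`, `g w = w^(-α) G w` for `𝒞 𝒫_α`. Fubini over the triangle `w < v` evaluates this to
`β⁻¹ ∫₀¹ (1 - w^β) g(w) dw`, which in both cases is `α⁻¹ (𝒫_α f - 𝒞 f)(x)`. Fubini applies because
Cauchy–Schwarz gives `∫₀^v |w^(-α) G w| dw ≤ c v^(1/2 - Re α)` when `Re α < 1/2`.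
Hence `𝒫_α - 𝒞 = α 𝒞 𝒫_α = α 𝒫_α 𝒞`, so `I + α 𝒫_α` inverts `I - α 𝒞`; the resolvent formula is
the case `α = λ⁻¹`, and `|λ - 1| > 1` says exactly that `Re λ⁻¹ < 1/2`.
-/

open MeasureTheory Complex Filter

noncomputable section

/-- `L²(ℝ)` with complex values. -/
abbrev L2 : Type := MeasureTheory.Lp ℂ 2 (MeasureTheory.volume : MeasureTheory.Measure ℝ)

/-- `C` is the continuous Cesàro operator on `L²(ℝ)`:
`(C f)(x) = ∫₀¹ f(ux) du`. -/
def IsCesaroOp (C : L2 →L[ℂ] L2) : Prop :=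
  ∀ f : L2, ∀ᵐ x : ℝ ∂MeasureTheory.volume, C f x = ∫ u in Set.Ioo (0:ℝ) 1, f (u * x)

/-- `T` is the Hausdorff operator with kernel `K`:
`(T f)(x) = ∫_ℝ K(u) f(ux) du`. -/
def IsHausdorffOp (K : ℝ → ℂ) (T : L2 →L[ℂ] L2) : Prop :=
  ∀ f : L2, ∀ᵐ x : ℝ ∂MeasureTheory.volume, T f x = ∫ u : ℝ, K u * f (u * x)

/-- The kernel `u^{-α} χ_{(0,1)}(u)` of the Hardy operator `𝒫_α`. -/
def hardyKernel (α : ℂ) : ℝ → ℂ := fun u =>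
  if u ∈ Set.Ioo (0:ℝ) 1 then (u : ℂ) ^ (-α) else 0

open Set

theorem ae_ae_comp_mul_right {p : ℝ → Prop} (h : ∀ᵐ t, p t) : ∀ᵐ x : ℝ, ∀ᵐ u : ℝ, p (u * x) := by
  filter_upwards [volume.ae_ne 0] with x hx
  rw [ae_iff] at h ⊢
  exact (Real.volume_preimage_mul_right hx {t | ¬p t}).trans (by rw [h, mul_zero])

theorem MemLp.comp_mul_right' {E : Type*} [NormedAddCommGroup E] {F : ℝ → E} {p : ENNReal}
    (hF : MemLp F p) {c : ℝ} (hc : c ≠ 0) : MemLp (fun u => F (u * c)) p :=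
  (hF.smul_measure ENNReal.ofReal_ne_top).comp_measurePreserving
    ⟨measurable_mul_const c, Real.map_volume_mul_right hc⟩

theorem setIntegral_Ioo_comp_mul_right {E : Type*} [NormedAddCommGroup E] [NormedSpace ℝ E]
    (g : ℝ → E) {v : ℝ} (hv : 0 < v) :
    ∫ u in Ioo 0 1, g (u * v) = v⁻¹ • ∫ w in Ioo 0 v, g w := by
  rw [← integral_Ioc_eq_integral_Ioo, ← integral_Ioc_eq_integral_Ioo,
    ← intervalIntegral.integral_of_le zero_le_one, ← intervalIntegral.integral_of_le hv.le,
    intervalIntegral.integral_comp_mul_right g hv.ne', zero_mul, one_mul]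

theorem memLp_cpow_neg_Ioo {α : ℂ} (hα : α.re < 1 / 2) {t : ℝ} (ht : 0 < t) :
    MemLp (fun w : ℝ => (w : ℂ) ^ (-α)) 2 (volume.restrict (Ioo 0 t)) := by
  have hm : AEStronglyMeasurable (fun w : ℝ => (w : ℂ) ^ (-α)) (volume.restrict (Ioo 0 t)) :=
    (measurable_ofReal.pow_const _).aestronglyMeasurable
  rw [memLp_two_iff_integrable_sq_norm hm]
  refine ((intervalIntegral.integrableOn_Ioo_rpow_iff ht).2
    (by linarith : -1 < -2 * α.re)).congr_fun (fun w hw => ?_) measurableSet_Ioo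
  rw [norm_cpow_eq_rpow_re_of_pos hw.1, ← Real.rpow_natCast, ← Real.rpow_mul hw.1.le]
  norm_num [mul_comm]

theorem integrableOn_cpow_neg_mul {G : ℝ → ℂ} (hG : MemLp G 2 (volume.restrict (Ioo 0 1)))
    {α : ℂ} (hα : α.re < 1 / 2) : IntegrableOn (fun w : ℝ => (w : ℂ) ^ (-α) * G w) (Ioo 0 1) :=
  memLp_one_iff_integrable.1 (hG.mul (memLp_cpow_neg_Ioo hα one_pos))

theorem exists_setIntegral_Ioo_norm_cpow_neg_mul_le {G : ℝ → ℂ}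
    (hG : MemLp G 2 (volume.restrict (Ioo 0 1))) {α : ℂ} (hα : α.re < 1 / 2) :
    ∃ c, ∀ v ∈ Ioo (0 : ℝ) 1,
      ∫ w in Ioo 0 v, ‖(w : ℂ) ^ (-α) * G w‖ ≤ c * v ^ (1 / 2 - α.re) := by
  set N := (∫ w in Ioo 0 1, ‖G w‖ ^ (2 : ℝ)) ^ (1 / 2 : ℝ)
  refine ⟨N / (1 - 2 * α.re) ^ (1 / 2 : ℝ), fun v hv => ?_⟩
  have hsub : Ioo 0 v ⊆ Ioo (0 : ℝ) 1 := Ioo_subset_Ioo_right hv.2.le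
  have hk : MemLp (fun w : ℝ => (w : ℂ) ^ (-α)) (ENNReal.ofReal 2) (volume.restrict (Ioo 0 v)) := by
    simpa using memLp_cpow_neg_Ioo hα hv.1
  have hGv : MemLp G (ENNReal.ofReal 2) (volume.restrict (Ioo 0 v)) := by
    simpa using hG.mono_measure (Measure.restrict_mono hsub le_rfl)
  have hkernel :
      ∫ w in Ioo 0 v, ‖(w : ℂ) ^ (-α)‖ ^ (2 : ℝ) = v ^ (1 - 2 * α.re) / (1 - 2 * α.re) := by
    rw [setIntegral_congr_fun measurableSet_Ioo (g := fun w : ℝ => w ^ (-2 * α.re)) fun w hw => by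
      rw [norm_cpow_eq_rpow_re_of_pos hw.1, ← Real.rpow_mul hw.1.le, neg_re]; ring_nf]
    rw [← integral_Ioc_eq_integral_Ioo, ← intervalIntegral.integral_of_le hv.1.le,
      integral_rpow (Or.inl (by linarith)), Real.zero_rpow (by linarith)]
    ring_nf
  have hG2 : ∫ w in Ioo 0 v, ‖G w‖ ^ (2 : ℝ) ≤ ∫ w in Ioo 0 1, ‖G w‖ ^ (2 : ℝ) := by
    refine setIntegral_mono_set ?_ (ae_of_all _ fun w => by positivity) hsub.eventuallyLE
    exact hG.integrable_norm_rpow two_ne_zero ENNReal.ofNat_ne_top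
  have hpos : 0 < 1 - 2 * α.re := by linarith
  calc ∫ w in Ioo 0 v, ‖(w : ℂ) ^ (-α) * G w‖
      = ∫ w in Ioo 0 v, ‖(w : ℂ) ^ (-α)‖ * ‖G w‖ := by simp only [norm_mul]
    _ ≤ (v ^ (1 - 2 * α.re) / (1 - 2 * α.re)) ^ (1 / 2 : ℝ) * N := by
      refine (integral_mul_norm_le_Lp_mul_Lq Real.HolderConjugate.two_two hk hGv).trans ?_
      rw [hkernel]
      exact mul_le_mul_of_nonneg_left
        (Real.rpow_le_rpow (integral_nonneg fun _ => by positivity) hG2 (by norm_num))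
        (Real.rpow_nonneg (div_nonneg (Real.rpow_nonneg hv.1.le _) hpos.le) _)
    _ = N / (1 - 2 * α.re) ^ (1 / 2 : ℝ) * v ^ (1 / 2 - α.re) := by
      rw [Real.div_rpow (Real.rpow_nonneg hv.1.le _) hpos.le, ← Real.rpow_mul hv.1.le]
      ring_nf

section Triangle

variable {g : ℝ → ℂ} {β : ℂ}

theorem indicator_lt_cpow_mul_apply (v w : ℝ) :
    {p : ℝ × ℝ | p.2 < p.1}.indicator (fun p => (p.1 : ℂ) ^ (β - 1) * g p.2) (v, w) =
      (Iio v).indicator (fun w => (v : ℂ) ^ (β - 1) * g w) w := by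
  simp [indicator_apply]

theorem integrable_indicator_lt_cpow_mul (hg : IntegrableOn g (Ioo 0 1)) {c γ : ℝ}
    (hγ : -β.re < γ) (hgc : ∀ v ∈ Ioo (0 : ℝ) 1, ∫ w in Ioo 0 v, ‖g w‖ ≤ c * v ^ γ) :
    Integrable ({p : ℝ × ℝ | p.2 < p.1}.indicator fun p => (p.1 : ℂ) ^ (β - 1) * g p.2)
      ((volume.restrict (Ioo 0 1)).prod (volume.restrict (Ioo 0 1))) := by
  have hm : AEStronglyMeasurable ({p : ℝ × ℝ | p.2 < p.1}.indicator
      fun p => (p.1 : ℂ) ^ (β - 1) * g p.2)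
      ((volume.restrict (Ioo 0 1)).prod (volume.restrict (Ioo 0 1))) :=
    (((measurable_ofReal.pow_const _).comp measurable_fst).aestronglyMeasurable.mul
      hg.aestronglyMeasurable.comp_snd).indicator (measurableSet_lt measurable_snd measurable_fst)
  refine (integrable_prod_iff hm).2 ⟨ae_of_all _ fun v => ?_, ?_⟩
  · simp_rw [indicator_lt_cpow_mul_apply]
    exact (hg.const_mul _).indicator measurableSet_Iio
  · refine Integrable.mono' (g := fun v => v ^ (β.re - 1) * (c * v ^ γ)) ?_
      hm.norm.integral_prod_right' ?_
    · refine IntegrableOn.congr_fun (((intervalIntegral.integrableOn_Ioo_rpow_iff one_pos).2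
        (by linarith : -1 < β.re - 1 + γ)).const_mul c) (fun v hv => ?_) measurableSet_Ioo
      rw [Real.rpow_add hv.1]; ring
    · filter_upwards [ae_restrict_mem measurableSet_Ioo] with v hv
      simp_rw [indicator_lt_cpow_mul_apply, norm_indicator_eq_indicator_norm, norm_mul,
        norm_cpow_eq_rpow_re_of_pos hv.1]
      rw [Real.norm_of_nonneg (integral_nonneg fun _ => indicator_nonneg (fun _ _ => mul_nonneg
          (Real.rpow_nonneg hv.1.le _) (norm_nonneg _)) _),
        setIntegral_indicator measurableSet_Iio, Ioo_inter_Iio, min_eq_right hv.2.le,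
        integral_const_mul, sub_re, one_re]
      exact mul_le_mul_of_nonneg_left (hgc v hv) (Real.rpow_nonneg hv.1.le _)

theorem integral_cpow_sub_one_mul_setIntegral_Ioo (hβ : β ≠ 0) (hg : IntegrableOn g (Ioo 0 1))
    {c γ : ℝ} (hγ : -β.re < γ) (hgc : ∀ v ∈ Ioo (0 : ℝ) 1, ∫ w in Ioo 0 v, ‖g w‖ ≤ c * v ^ γ) :
    ∫ v in Ioo (0 : ℝ) 1, (v : ℂ) ^ (β - 1) * ∫ w in Ioo 0 v, g w =
      β⁻¹ * ∫ w in Ioo (0 : ℝ) 1, (1 - (w : ℂ) ^ β) * g w := by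
  have hinner (v : ℝ) (hv : v ∈ Ioo (0 : ℝ) 1) : (v : ℂ) ^ (β - 1) * ∫ w in Ioo 0 v, g w =
      ∫ w in Ioo 0 1, {p : ℝ × ℝ | p.2 < p.1}.indicator
        (fun p => (p.1 : ℂ) ^ (β - 1) * g p.2) (v, w) := by
    simp_rw [indicator_lt_cpow_mul_apply]
    rw [setIntegral_indicator measurableSet_Iio, Ioo_inter_Iio, min_eq_right hv.2.le,
      integral_const_mul]
  have houter (w : ℝ) (hw : w ∈ Ioo (0 : ℝ) 1) :
      ∫ v in Ioo 0 1, {p : ℝ × ℝ | p.2 < p.1}.indicator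
        (fun p => (p.1 : ℂ) ^ (β - 1) * g p.2) (v, w) = β⁻¹ * ((1 - (w : ℂ) ^ β) * g w) := by
    have hslice : (fun v => {p : ℝ × ℝ | p.2 < p.1}.indicator
        (fun p => (p.1 : ℂ) ^ (β - 1) * g p.2) (v, w)) =
        (Ioi w).indicator fun v => (v : ℂ) ^ (β - 1) * g w := by
      ext v; simp [indicator_apply]
    have h0 : (0 : ℝ) ∉ uIcc w 1 := by
      rw [uIcc_of_le hw.2.le]; exact fun h => hw.1.not_ge h.1
    rw [hslice, setIntegral_indicator measurableSet_Ioi, Ioo_inter_Ioi, max_eq_right hw.1.le,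
      integral_mul_const, ← integral_Ioc_eq_integral_Ioo, ← intervalIntegral.integral_of_le hw.2.le,
      integral_cpow (Or.inr ⟨by simpa [sub_eq_neg_self] using hβ, h0⟩)]
    simp only [sub_add_cancel, ofReal_one, one_cpow]
    field_simp
  rw [setIntegral_congr_fun measurableSet_Ioo hinner,
    integral_integral_swap (f := fun v w => {p : ℝ × ℝ | p.2 < p.1}.indicator
      (fun p => (p.1 : ℂ) ^ (β - 1) * g p.2) (v, w)) (integrable_indicator_lt_cpow_mul hg hγ hgc),
    setIntegral_congr_fun measurableSet_Ioo houter, integral_const_mul]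

end Triangle

theorem integral_cpow_mul_setIntegral_comp_mul {g : ℝ → ℂ} {β : ℂ} (hβ : β ≠ 0)
    (hg : IntegrableOn g (Ioo 0 1)) {c γ : ℝ} (hγ : -β.re < γ)
    (hgc : ∀ v ∈ Ioo (0 : ℝ) 1, ∫ w in Ioo 0 v, ‖g w‖ ≤ c * v ^ γ) :
    ∫ v in Ioo (0 : ℝ) 1, (v : ℂ) ^ β * ∫ u in Ioo (0 : ℝ) 1, g (u * v) =
      β⁻¹ * ∫ w in Ioo (0 : ℝ) 1, (1 - (w : ℂ) ^ β) * g w := by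
  rw [← integral_cpow_sub_one_mul_setIntegral_Ioo hβ hg hγ hgc]
  refine setIntegral_congr_fun measurableSet_Ioo fun v hv => ?_
  rw [setIntegral_Ioo_comp_mul_right g hv.1, cpow_sub _ _ (ofReal_ne_zero.2 hv.1.ne'), cpow_one,
    real_smul, ofReal_inv]
  ring

def cesaroMean (φ : ℝ → ℂ) (x : ℝ) : ℂ := ∫ u in Ioo (0 : ℝ) 1, φ (u * x)

def hardyMean (α : ℂ) (φ : ℝ → ℂ) (x : ℝ) : ℂ := ∫ u in Ioo (0 : ℝ) 1, (u : ℂ) ^ (-α) * φ (u * x)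

section Pointwise

variable {α : ℂ} {F : ℝ → ℂ} {x : ℝ}

theorem hardyMean_sub_cesaroMean (hα : α.re < 1 / 2)
    (hF : MemLp (fun w => F (w * x)) 2 (volume.restrict (Ioo 0 1))) :
    hardyMean α F x - cesaroMean F x = ∫ w in Ioo (0 : ℝ) 1, ((w : ℂ) ^ (-α) - 1) * F (w * x) := by
  simp only [hardyMean, cesaroMean, sub_mul, one_mul]
  exact (integral_sub (integrableOn_cpow_neg_mul hF hα) (hF.integrable one_le_two)).symm

theorem mul_hardyMean_cesaroMean (hα : α.re < 1 / 2) (hα0 : α ≠ 0)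
    (hF : MemLp (fun w => F (w * x)) 2 (volume.restrict (Ioo 0 1))) :
    α * hardyMean α (cesaroMean F) x = hardyMean α F x - cesaroMean F x := by
  obtain ⟨c, hc⟩ := exists_setIntegral_Ioo_norm_cpow_neg_mul_le hF (α := 0) (by norm_num)
  have hc' : ∀ v ∈ Ioo (0 : ℝ) 1, ∫ w in Ioo 0 v, ‖F (w * x)‖ ≤ c * v ^ (1 / 2 : ℝ) := by
    simpa using hc
  have h := integral_cpow_mul_setIntegral_comp_mul (neg_ne_zero.2 hα0)
    (hF.integrable one_le_two) (by simpa using hα) hc'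
  rw [hardyMean_sub_cesaroMean hα hF, hardyMean]
  simp only [cesaroMean, ← mul_assoc]
  rw [h, ← mul_assoc, ← integral_const_mul]
  refine integral_congr_ae (ae_of_all _ fun w => ?_)
  field_simp
  ring

theorem mul_cesaroMean_hardyMean (hα : α.re < 1 / 2) (hα0 : α ≠ 0)
    (hF : MemLp (fun w => F (w * x)) 2 (volume.restrict (Ioo 0 1))) :
    α * cesaroMean (hardyMean α F) x = hardyMean α F x - cesaroMean F x := by
  obtain ⟨c, hc⟩ := exists_setIntegral_Ioo_norm_cpow_neg_mul_le hF hα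
  have h := integral_cpow_mul_setIntegral_comp_mul hα0 (integrableOn_cpow_neg_mul hF hα)
    (by linarith : -α.re < 1 / 2 - α.re) hc
  have hne {u : ℝ} (hu : u ∈ Ioo (0 : ℝ) 1) : (u : ℂ) ^ α ≠ 0 :=
    cpow_ne_zero_iff.2 (Or.inl (ofReal_ne_zero.2 hu.1.ne'))
  have hswap : cesaroMean (hardyMean α F) x = ∫ u in Ioo (0 : ℝ) 1,
      (u : ℂ) ^ α * ∫ v in Ioo (0 : ℝ) 1, ((v * u : ℝ) : ℂ) ^ (-α) * F (v * u * x) := by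
    refine setIntegral_congr_fun measurableSet_Ioo fun u hu => ?_
    rw [← integral_const_mul]
    refine setIntegral_congr_fun measurableSet_Ioo fun v hv => ?_
    rw [ofReal_mul, mul_cpow_ofReal_nonneg hv.1.le hu.1.le, mul_assoc v]
    simp only [cpow_neg]
    field_simp [hne hu]
  rw [hswap, h, hardyMean_sub_cesaroMean hα hF, ← mul_assoc, mul_inv_cancel₀ hα0, one_mul]
  refine setIntegral_congr_fun measurableSet_Ioo fun w hw => ?_
  rw [cpow_neg]
  field_simp [hne hw]

end Pointwise

theorem IsCesaroOp.coeFn_apply_ae_eq {C : L2 →L[ℂ] L2} (hC : IsCesaroOp C) {f : L2} {φ : ℝ → ℂ}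
    (hφ : ⇑f =ᵐ[volume] φ) : ⇑(C f) =ᵐ[volume] cesaroMean φ := by
  filter_upwards [hC f, ae_ae_comp_mul_right hφ] with x hCx hx
  exact hCx.trans (integral_congr_ae (ae_restrict_of_ae hx))

theorem IsHausdorffOp.hardyKernel_coeFn_apply_ae_eq {α : ℂ} {P : L2 →L[ℂ] L2}
    (hP : IsHausdorffOp (hardyKernel α) P) {f : L2} {φ : ℝ → ℂ} (hφ : ⇑f =ᵐ[volume] φ) :
    ⇑(P f) =ᵐ[volume] hardyMean α φ := by
  filter_upwards [hP f, ae_ae_comp_mul_right hφ] with x hPx hx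
  rw [hPx, hardyMean, ← integral_indicator measurableSet_Ioo]
  refine integral_congr_ae ?_
  filter_upwards [hx] with u hu
  simp [hardyKernel, indicator_apply, hu]

theorem hardy_sub_cesaro_eq_smul_mul {C P : L2 →L[ℂ] L2} (hC : IsCesaroOp C) {α : ℂ}
    (hα : α.re < 1 / 2) (hα0 : α ≠ 0) (hP : IsHausdorffOp (hardyKernel α) P) :
    P - C = α • (C * P) ∧ P - C = α • (P * C) := by
  have hCf (f : L2) := hC.coeFn_apply_ae_eq (ae_eq_refl (f := ⇑f))
  have hPf (f : L2) := hP.hardyKernel_coeFn_apply_ae_eq (ae_eq_refl (f := ⇑f))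
  have hdil (f : L2) : ∀ᵐ x, MemLp (fun w => f (w * x)) 2 (volume.restrict (Ioo 0 1)) := by
    filter_upwards [volume.ae_ne 0] with x hx
    exact (MemLp.comp_mul_right' (Lp.memLp f) hx).restrict _
  constructor <;> refine ContinuousLinearMap.ext fun f => Lp.ext ?_
  · change ⇑(P f - C f) =ᵐ[volume] ⇑(α • C (P f))
    filter_upwards [Lp.coeFn_sub (P f) (C f), Lp.coeFn_smul α (C (P f)), hCf f, hPf f,
      hC.coeFn_apply_ae_eq (hPf f), hdil f] with x hsub hsmul hCx hPx hCPx hx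
    rw [hsub, hsmul, Pi.sub_apply, Pi.smul_apply, smul_eq_mul, hCx, hPx, hCPx]
    exact (mul_cesaroMean_hardyMean hα hα0 hx).symm
  · change ⇑(P f - C f) =ᵐ[volume] ⇑(α • P (C f))
    filter_upwards [Lp.coeFn_sub (P f) (C f), Lp.coeFn_smul α (P (C f)), hCf f, hPf f,
      hP.hardyKernel_coeFn_apply_ae_eq (hCf f), hdil f] with x hsub hsmul hCx hPx hPCx hx
    rw [hsub, hsmul, Pi.sub_apply, Pi.smul_apply, smul_eq_mul, hCx, hPx, hPCx]
    exact (mul_hardyMean_cesaroMean hα hα0 hx).symm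

section Algebra

variable {R A : Type*} [CommRing R] [Ring A] [Algebra R A] {r : R} {a b : A}

theorem one_sub_smul_mul_one_add_smul (h : b - a = r • (a * b)) :
    (1 - r • a) * (1 + r • b) = 1 := by
  rw [sub_mul, mul_add, mul_add, smul_mul_smul_comm, mul_smul, ← h]
  simp only [one_mul, mul_one, smul_sub]
  abel

theorem one_add_smul_mul_one_sub_smul (h : b - a = r • (b * a)) :
    (1 + r • b) * (1 - r • a) = 1 := by
  rw [add_mul, mul_sub, mul_sub, smul_mul_smul_comm, mul_smul, ← h]
  simp only [one_mul, mul_one, smul_sub]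
  abel

end Algebra

theorem Complex.re_inv_lt_half {z : ℂ} (h : 1 < ‖z - 1‖) : z⁻¹.re < 1 / 2 := by
  have hz : z ≠ 0 := by rintro rfl; norm_num at h
  have h1 : 1 < normSq (z - 1) := by
    rw [← Complex.sq_norm]; nlinarith [norm_nonneg (z - 1)]
  rw [inv_re, div_lt_iff₀ (normSq_pos.2 hz)]
  simp only [normSq_apply, sub_re, sub_im, one_re, one_im] at h1 ⊢
  nlinarith

theorem stmt3_general
    (C : L2 →L[ℂ] L2) (hC : IsCesaroOp C) :
    (∀ lam : ℂ, 1 < ‖lam - 1‖ →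
      ∀ P : L2 →L[ℂ] L2, IsHausdorffOp (hardyKernel lam⁻¹) P →
        (algebraMap ℂ (L2 →L[ℂ] L2) lam - C) * (lam⁻¹ ^ 2 • P + lam⁻¹ • 1) = 1 ∧
        (lam⁻¹ ^ 2 • P + lam⁻¹ • 1) * (algebraMap ℂ (L2 →L[ℂ] L2) lam - C) = 1) ∧
    (∀ α : ℂ, α.re < 1/2 → α ≠ 0 →
      ∀ P : L2 →L[ℂ] L2, IsHausdorffOp (hardyKernel α) P →
        (1 - α • C) * (1 + α • P) = 1 ∧ (1 + α • P) * (1 - α • C) = 1) := by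
  have resolvent (α : ℂ) (hα : α.re < 1 / 2) (hα0 : α ≠ 0) (P : L2 →L[ℂ] L2)
      (hP : IsHausdorffOp (hardyKernel α) P) :
      (1 - α • C) * (1 + α • P) = 1 ∧ (1 + α • P) * (1 - α • C) = 1 :=
    ⟨one_sub_smul_mul_one_add_smul (hardy_sub_cesaro_eq_smul_mul hC hα hα0 hP).1,
      one_add_smul_mul_one_sub_smul (hardy_sub_cesaro_eq_smul_mul hC hα hα0 hP).2⟩
  refine ⟨fun lam hlam P hP => ?_, resolvent⟩
  have hlam0 : lam ≠ 0 := by rintro rfl; norm_num at hlam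
  have hsub : algebraMap ℂ (L2 →L[ℂ] L2) lam - C = lam • (1 - lam⁻¹ • C) := by
    rw [smul_sub, smul_smul, mul_inv_cancel₀ hlam0, one_smul, Algebra.algebraMap_eq_smul_one]
  have hres : lam⁻¹ ^ 2 • P + lam⁻¹ • (1 : L2 →L[ℂ] L2) = lam⁻¹ • (1 + lam⁻¹ • P) := by
    rw [smul_add, smul_smul, sq, add_comm]
  rw [hsub, hres, smul_mul_smul_comm, smul_mul_smul_comm, mul_inv_cancel₀ hlam0,
    inv_mul_cancel₀ hlam0, one_smul, one_smul]
  exact resolvent lam⁻¹ (re_inv_lt_half hlam) (inv_ne_zero hlam0) P hP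

/-- For `|λ - 1| > 1`, the resolvent of the Cesàro operator `C` on
`L²(ℝ)` is `(λI - C)⁻¹ = λ⁻² 𝒫_{1/λ} + λ⁻¹ I`, where `𝒫_α` is the Hardy operator
(the Hausdorff operator with kernel `u^{-α} χ_{(0,1)}`); equivalently, for
`Re α < 1/2`, `α ≠ 0`, one has `𝒫_α = α⁻¹((I - αC)⁻¹ - I)`,
i.e. `I + α 𝒫_α = (I - αC)⁻¹`. -/
theorem stmt3
    (C : L2 →L[ℂ] L2) (hC : IsCesaroOp C)
    (hσ : spectrum ℂ C = Metric.sphere (1:ℂ) 1) :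
    (∀ lam : ℂ, 1 < ‖lam - 1‖ →
      ∀ P : L2 →L[ℂ] L2, IsHausdorffOp (hardyKernel lam⁻¹) P →
        (algebraMap ℂ (L2 →L[ℂ] L2) lam - C) * (lam⁻¹ ^ 2 • P + lam⁻¹ • 1) = 1 ∧
        (lam⁻¹ ^ 2 • P + lam⁻¹ • 1) * (algebraMap ℂ (L2 →L[ℂ] L2) lam - C) = 1) ∧
    (∀ α : ℂ, α.re < 1/2 → α ≠ 0 →
      ∀ P : L2 →L[ℂ] L2, IsHausdorffOp (hardyKernel α) P →
        (1 - α • C) * (1 + α • P) = 1 ∧ (1 + α • P) * (1 - α • C) = 1) :=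
  stmt3_general C hC
end
end

section
/- Let F be a function holomorphic in a neighborhood of the circle 𝕋+1 = {z ∈ ℂ : |z−1| = 1}, with F(0) = 0 if 0 lies in that neighborhood. Then F(𝒞₊) = F(𝒞)₊, i.e., the holomorphic functional calculus of the Cesàro operator 𝒞₊ on L²(ℝ₊) equals the restriction to L²(ℝ₊) of the holomorphic functional calculus of the Cesàro operator 𝒞 on L²(ℝ). -/
open MeasureTheory Complex Filter

noncomputable section

/-! Since `J` is an isometry, `P = J J*` intertwines the normal operators `J 𝒞₊ J*` and `𝒞`
(`P (J 𝒞₊ J*) = 𝒞 P`), so by the Fuglede–Putnam theorem it also intertwines their adjoints, which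
gives `J 𝒞₊* = 𝒞* J`. Intertwining `𝒞₊` with `𝒞` and `𝒞₊*` with `𝒞*`, the isometry `J` intertwines
`p(𝒞₊)` with `p(𝒞)` for every polynomial `p` in `z` and `z̄`, hence, by Stone–Weierstrass and
continuity of the functional calculus, `F(𝒞₊)` with `F(𝒞)` for every `F` continuous on the common
spectrum. -/

open ContinuousLinearMap

section Intertwining

variable {H K : Type*} [NormedAddCommGroup H] [InnerProductSpace ℂ H] [CompleteSpace H]
  [NormedAddCommGroup K] [InnerProductSpace ℂ K] [CompleteSpace K]

theorem adjoint_intertwine_of_isStarNormal {a : H →L[ℂ] H} {b : K →L[ℂ] K} {V : K →L[ℂ] H}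
    (hV : adjoint V ∘L V = 1) (ha : IsStarNormal a) (hb : IsStarNormal b)
    (h : V ∘L b = a ∘L V) : V ∘L adjoint b = adjoint a ∘L V := by
  have cancel₁ (T : H →L[ℂ] K) : adjoint V ∘L V ∘L T = T := by
    rw [← comp_assoc, hV, one_def, id_comp]
  have cancel₂ (T : K →L[ℂ] K) : adjoint V ∘L V ∘L T = T := by
    rw [← comp_assoc, hV, one_def, id_comp]
  set P : H →L[ℂ] H := V ∘L adjoint V
  set B : H →L[ℂ] H := V ∘L b ∘L adjoint V
  have hB_adj : adjoint B = V ∘L adjoint b ∘L adjoint V := by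
    simp only [B, adjoint_comp, adjoint_adjoint, comp_assoc]
  have hBnormal : IsStarNormal B := by
    refine ⟨show adjoint B ∘L B = B ∘L adjoint B from ?_⟩
    simp only [hB_adj, B, comp_assoc, cancel₁]
    rw [← comp_assoc _ b, ← comp_assoc b]
    congr 2
    exact hb.star_comm_self
  have hPB : SemiconjBy P B a := by
    show P ∘L B = a ∘L P
    simp only [P, B, comp_assoc, cancel₁]
    rw [← comp_assoc a, ← h, comp_assoc]
  have hPB' : P ∘L adjoint B = adjoint a ∘L P := (hPB.star_right hBnormal ha).eq
  calc V ∘L adjoint b = (P ∘L adjoint B) ∘L V := by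
        simp only [P, hB_adj, comp_assoc, hV, one_def, comp_id, cancel₂]
    _ = adjoint a ∘L V := by simp only [hPB', P, comp_assoc, hV, one_def, comp_id]

theorem cfcHomSuperset_intertwine {a : H →L[ℂ] H} {b : K →L[ℂ] K} {V : K →L[ℂ] H}
    (ha : IsStarNormal a) (hb : IsStarNormal b)
    (h : V ∘L b = a ∘L V) (h' : V ∘L adjoint b = adjoint a ∘L V)
    {s : Set ℂ} [CompactSpace s] (has : spectrum ℂ a ⊆ s) (hbs : spectrum ℂ b ⊆ s)
    (f : C(s, ℂ)) :
    V ∘L cfcHomSuperset hb hbs f = cfcHomSuperset ha has f ∘L V := by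
  induction f using ContinuousMap.induction_on_of_compact with
  | const r =>
    have : ContinuousMap.const s r = algebraMap ℂ C(s, ℂ) r := rfl
    rw [this, AlgHomClass.commutes, AlgHomClass.commutes]
    ext; simp [Algebra.algebraMap_eq_smul_one]
  | id => simpa only [cfcHomSuperset_id]
  | star_id => simpa only [map_star, cfcHomSuperset_id, star_eq_adjoint]
  | add f g hf hg => simp only [map_add, comp_add, add_comp, hf, hg]
  | mul f g hf hg =>
    rw [map_mul, map_mul, mul_def, mul_def, ← comp_assoc, hf, comp_assoc, hg, comp_assoc]
  | frequently f hf =>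
    have hclosed : IsClosed
        {g : C(s, ℂ) | V ∘L cfcHomSuperset hb hbs g = cfcHomSuperset ha has g ∘L V} :=
      have := cfcHomSuperset_continuous ha has
      have := cfcHomSuperset_continuous hb hbs
      isClosed_eq (by fun_prop) (by fun_prop)
    exact hclosed.mem_of_frequently_of_tendsto hf tendsto_id

theorem cfc_intertwine {a : H →L[ℂ] H} {b : K →L[ℂ] K} {V : K →L[ℂ] H}
    (ha : IsStarNormal a) (hb : IsStarNormal b)
    (h : V ∘L b = a ∘L V) (h' : V ∘L adjoint b = adjoint a ∘L V)
    (f : ℂ → ℂ) (hf : ContinuousOn f (spectrum ℂ a ∪ spectrum ℂ b)) :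
    V ∘L cfc f b = cfc f a ∘L V := by
  set s := spectrum ℂ a ∪ spectrum ℂ b
  have : CompactSpace s :=
    isCompact_iff_compactSpace.mp ((spectrum.isCompact a).union (spectrum.isCompact b))
  have has : spectrum ℂ a ⊆ s := Set.subset_union_left
  have hbs : spectrum ℂ b ⊆ s := Set.subset_union_right
  have hcfc_a : cfc f a = cfcHomSuperset ha has ⟨_, hf.domRestrict⟩ := by
    rw [cfcHomSuperset_apply, cfc_apply f a ha (hf.mono has)]; rfl
  have hcfc_b : cfc f b = cfcHomSuperset hb hbs ⟨_, hf.domRestrict⟩ := by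
    rw [cfcHomSuperset_apply, cfc_apply f b hb (hf.mono hbs)]; rfl
  rw [hcfc_a, hcfc_b]
  exact cfcHomSuperset_intertwine ha hb h h' has hbs _

end Intertwining

theorem stmt16_general
    (C : L2 →L[ℂ] L2) (hN : IsStarNormal C)
    (hσ : spectrum ℂ C = Metric.sphere (1:ℂ) 1)
    (Hp : Type) [NormedAddCommGroup Hp] [InnerProductSpace ℂ Hp] [CompleteSpace Hp]
    (J : Hp →ₗᵢ[ℂ] L2)
    (Cp : Hp →L[ℂ] Hp) (hCp : ∀ g : Hp, J (Cp g) = C (J g))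
    (hNp : IsStarNormal Cp)
    (hσp : spectrum ℂ Cp = Metric.sphere (1:ℂ) 1)
    (F : ℂ → ℂ) (U : Set ℂ)
    (hsub : Metric.sphere (1:ℂ) 1 ⊆ U)
    (hF : DifferentiableOn ℂ F U) :
    ∀ g : Hp, J ((cfc F Cp) g) = (cfc F C) (J g) := by
  have hJC : J.toContinuousLinearMap ∘L Cp = C ∘L J.toContinuousLinearMap := ext hCp
  have hJC_adj := adjoint_intertwine_of_isStarNormal J.adjoint_comp_self hN hNp hJC
  have hFc : ContinuousOn F (spectrum ℂ C ∪ spectrum ℂ Cp) := by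
    rw [hσ, hσp, Set.union_self]
    exact hF.continuousOn.mono hsub
  intro g
  exact congr($(cfc_intertwine hN hNp hJC hJC_adj F hFc) g)

/-- Let `Hp ≅ L²(ℝ₊)` be the closed subspace of `L²(ℝ)` of
functions vanishing a.e. on `(-∞, 0)` (realized as a Hilbert space `Hp` with a
linear isometry `J` onto that subspace), let `C₊` be the restriction of the Cesàro
operator `C` (i.e. `J ∘ C₊ = C ∘ J`), and let `F` be holomorphic in a neighborhood
`U` of the circle `𝕋+1` (the common spectrum of `C` and `C₊`), with `F 0 = 0`
whenever `0 ∈ U`. Then `F(C₊) = F(C)₊`, i.e. the functional calculus of `C₊`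
(realized for the normal operator `C₊` as `cfc F C₊`) is the restriction to the
subspace of the functional calculus of `C`. -/
theorem stmt16
    (C : L2 →L[ℂ] L2) (hC : IsCesaroOp C) (hN : IsStarNormal C)
    (hσ : spectrum ℂ C = Metric.sphere (1:ℂ) 1)
    (Hp : Type) [NormedAddCommGroup Hp] [InnerProductSpace ℂ Hp] [CompleteSpace Hp]
    (J : Hp →ₗᵢ[ℂ] L2)
    (hJ : ∀ f : L2, (∃ g : Hp, J g = f) ↔
      ∀ᵐ x : ℝ ∂MeasureTheory.volume, x < 0 → f x = 0)
    (Cp : Hp →L[ℂ] Hp) (hCp : ∀ g : Hp, J (Cp g) = C (J g))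
    (hNp : IsStarNormal Cp)
    (hσp : spectrum ℂ Cp = Metric.sphere (1:ℂ) 1)
    (F : ℂ → ℂ) (U : Set ℂ) (hU : IsOpen U)
    (hsub : Metric.sphere (1:ℂ) 1 ⊆ U)
    (hF : DifferentiableOn ℂ F U) (hF0 : (0:ℂ) ∈ U → F 0 = 0) :
    ∀ g : Hp, J ((cfc F Cp) g) = (cfc F C) (J g) :=
  stmt16_general C hN hσ Hp J Cp hCp hNp hσp F U hsub hF
end
end
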